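/- (Lemma A.1) For every point R ∈ ℝ², the point K(R) is the midpoint of the segment joining T_P(R) and T_{P'}(R). -/
import Mathlib

noncomputable section

/-- The line through the point `X` with direction vector `v`. -/
def lineT (X v : ℝ × ℝ) : Set (ℝ × ℝ) := {Y | ∃ t : ℝ, Y = X + t • v}

/-- A general polynomial function of degree at most 2 on `ℝ²`, with given coefficients. -/
def quadF (a b c d e k : ℝ) : ℝ × ℝ → ℝ :=
  fun x => a * x.1 ^ 2 + b * x.1 * x.2 + c * x.2 ^ 2 + d * x.1 + e * x.2 + k

/-- `f` is a polynomial function of degree at most 2. -/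
def IsQuad (f : ℝ × ℝ → ℝ) : Prop := ∃ a b c d e k, f = quadF a b c d e k

theorem statement18
    (A B C P D E F D' E' F' P' Q G : ℝ × ℝ)
    (hABC : AffineIndependent ℝ ![A, B, C])
    (hG : G = (3⁻¹ : ℝ) • (A + B + C))
    (hPBC : P ∉ lineT B (C - B)) (hPCA : P ∉ lineT C (A - C)) (hPAB : P ∉ lineT A (B - A))
    (hPpa : P ∉ lineT A (C - B)) (hPpb : P ∉ lineT B (A - C)) (hPpc : P ∉ lineT C (B - A))
    (hD : D ∈ lineT A (P - A) ∧ D ∈ lineT B (C - B))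
    (hE : E ∈ lineT B (P - B) ∧ E ∈ lineT C (A - C))
    (hF : F ∈ lineT C (P - C) ∧ F ∈ lineT A (B - A))
    (hD' : D' = B + C - D) (hE' : E' = C + A - E) (hF' : F' = A + B - F)
    (hP' : P' ∈ lineT A (D' - A) ∧ P' ∈ lineT B (E' - B))
    (hQdef : Q = G + (-(1/2) : ℝ) • (P' - G))
    (D₃ E₃ F₃ : ℝ × ℝ)
    (hD₃ : D₃ ∈ lineT A (P' - A) ∧ D₃ ∈ lineT B (C - B))
    (hE₃ : E₃ ∈ lineT B (P' - B) ∧ E₃ ∈ lineT C (A - C))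
    (hF₃ : F₃ ∈ lineT C (P' - C) ∧ F₃ ∈ lineT A (B - A))
    (TP TP' : (ℝ × ℝ) →ᵃ[ℝ] (ℝ × ℝ))
    (hTPA : TP A = D) (hTPB : TP B = E) (hTPC : TP C = F)
    (hTP'A : TP' A = D₃) (hTP'B : TP' B = E₃) (hTP'C : TP' C = F₃)
 :
    ∀ R : ℝ × ℝ, G + (-(1/2) : ℝ) • (R - G) = midpoint ℝ (TP R) (TP' R) := by
  obtain ⟨⟨ta, hDa⟩, ⟨sd, hDb⟩⟩ := hD
  obtain ⟨⟨tb, hEa⟩, ⟨se, hEb⟩⟩ := hE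
  obtain ⟨⟨tc, hFa⟩, ⟨sf, hFb⟩⟩ := hF
  obtain ⟨⟨u, hP'a⟩, ⟨v, hP'b⟩⟩ := hP'
  obtain ⟨⟨m, hD3a⟩, ⟨n, hD3b⟩⟩ := hD₃
  obtain ⟨⟨m2, hE3a⟩, ⟨n2, hE3b⟩⟩ := hE₃
  obtain ⟨⟨w, hF3a⟩, ⟨g, hF3b⟩⟩ := hF₃
  -- scalar form of affine independence
  have uniq : ∀ x y : ℝ, x • (B - A) + y • (C - A) = 0 → x = 0 ∧ y = 0 := by
    intro x y h
    have h2 : ∑ i ∈ Finset.univ, (![-x - y, x, y]) i • (![A, B, C]) i = 0 := by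
      simp only [Fin.sum_univ_three, Matrix.cons_val_zero, Matrix.cons_val_one, Matrix.head_cons,
        Matrix.cons_val_two, Matrix.tail_cons]
      linear_combination (norm := module) h
    have h3 := affineIndependent_iff.1 hABC Finset.univ ![-x - y, x, y]
      (by simp [Fin.sum_univ_three]; ring) h2
    exact ⟨by simpa using h3 1 (Finset.mem_univ _), by simpa using h3 2 (Finset.mem_univ _)⟩
  -- the frame spans the plane
  have hLI : LinearIndependent ℝ ![B - A, C - A] :=
    LinearIndependent.pair_iff.2 fun s t h => uniq s t h
  have hsp : Submodule.span ℝ ({B - A, C - A} : Set (ℝ × ℝ)) = ⊤ := by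
    have hcard : Fintype.card (Fin 2) = Module.finrank ℝ (ℝ × ℝ) := by
      simp [Module.finrank_prod]
    have := hLI.span_eq_top_of_card_eq_finrank hcard
    have hrange : Set.range ![B - A, C - A] = ({B - A, C - A} : Set (ℝ × ℝ)) := by
      simp [Matrix.range_cons, Matrix.range_empty]; exact Set.pair_comm _ _
    rwa [hrange] at this
  have coords : ∀ X : ℝ × ℝ, ∃ a b : ℝ, X - A = a • (B - A) + b • (C - A) := by
    intro X
    have hmem : X - A ∈ Submodule.span ℝ ({B - A, C - A} : Set (ℝ × ℝ)) := by
      rw [hsp]; trivial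
    obtain ⟨a, b, hab⟩ := Submodule.mem_span_pair.1 hmem
    exact ⟨a, b, hab.symm⟩
  obtain ⟨p, q, hP⟩ := coords P
  -- nondegeneracy conditions in coordinates
  have hq0 : q ≠ 0 := by
    intro h; subst h
    exact hPAB ⟨p, by linear_combination (norm := module) hP⟩
  have hp0 : p ≠ 0 := by
    intro h; subst h
    exact hPCA ⟨1 - q, by linear_combination (norm := module) hP⟩
  have hpq : p + q ≠ 0 := by
    intro h
    have h' : (p + q) • (C - A) = (0 : ℝ × ℝ) := by rw [h]; simp
    exact hPpa ⟨-p, by linear_combination (norm := module) hP + h'⟩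
  have hp1 : p ≠ 1 := by
    intro h; subst h
    exact hPpb ⟨-q, by linear_combination (norm := module) hP⟩
  have hq1 : q ≠ 1 := by
    intro h; subst h
    exact hPpc ⟨p, by linear_combination (norm := module) hP⟩
  -- extract scalar relations from the incidence hypotheses
  obtain ⟨i1, i2⟩ := uniq (ta * p - 1 + sd) (ta * q - sd)
    (by linear_combination (norm := module) hDb - hDa - ta • hP)
  obtain ⟨j1, j2⟩ := uniq (tb * (p - 1) + 1) (tb * q - 1 + se)
    (by linear_combination (norm := module) hEb - hEa - tb • hP)
  obtain ⟨k1, k2⟩ := uniq (tc * p - sf) (tc * (q - 1) + 1)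
    (by linear_combination (norm := module) hFb - hFa - tc • hP)
  obtain ⟨r1, r2⟩ := uniq (u * sd - 1 + v) (u * (1 - sd) - v * se)
    (by linear_combination (norm := module) hP'b - hP'a - u • hD' + u • hDb + v • hE' - v • hEb)
  obtain ⟨s1, s2⟩ := uniq (m * u * sd - 1 + n) (m * u * (1 - sd) - n)
    (by linear_combination (norm := module) hD3b - hD3a - m • hP'a - (m * u) • hD' + (m * u) • hDb)
  obtain ⟨x1, y1⟩ := uniq (1 - m2 * v) (n2 - 1 + m2 * v * se)
    (by linear_combination (norm := module) hE3b - hE3a - m2 • hP'b - (m2 * v) • hE' + (m2 * v) • hEb)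
  obtain ⟨l1, l2⟩ := uniq (w * u * sd - g) (1 - w + w * u - w * u * sd)
    (by linear_combination (norm := module) hF3b - hF3a - w • hP'a - (w * u) • hD' + (w * u) • hDb)
  -- scalar algebra
  have h_sd : sd * (p + q) = q := by linear_combination q * i1 - p * i2
  have h_se : se * (1 - p) = 1 - p - q := by linear_combination (1 - p) * j2 + q * j1
  have h_sf : sf * (1 - q) = p := by linear_combination (-(1 - q)) * k1 - p * k2
  have h_v : v * (1 - sd + sd * se) = 1 - sd := by linear_combination (1 - sd) * r1 - sd * r2
  have h_g1 : g * (1 - u * (1 - sd)) = u * sd := by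
    linear_combination (-(1 - u * (1 - sd))) * l1 - (u * sd) * l2
  have h_g2 : g * (1 - v * se) = 1 - v := by linear_combination h_g1 + g * r2 + r1
  have h_g3 : g * (1 - sd - se + 2 * sd * se) = sd * se := by
    linear_combination (1 - sd + sd * se) * h_g2 + (g * se - 1) * h_v
  have h_mu : (1 - sd - se + 2 * sd * se) * ((p + q) * (1 - p)) = q * (1 - q) := by
    linear_combination ((2 * se - 1) * (1 - p)) * h_sd + (2 * q - (p + q)) * h_se
  have h_prod : sd * se * ((p + q) * (1 - p)) = q * (1 - p - q) := by
    linear_combination (se * (1 - p)) * h_sd + q * h_se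
  have h_g5 : g * (q * (1 - q)) = q * (1 - p - q) := by
    linear_combination ((p + q) * (1 - p)) * h_g3 - g * h_mu + h_prod
  have h_g6 : g * (1 - q) = 1 - p - q :=
    mul_left_cancel₀ hq0 (by linear_combination h_g5)
  have h_fg : sf + g = 1 := by
    have h1q : (1 : ℝ) - q ≠ 0 := sub_ne_zero.2 (Ne.symm hq1)
    have := mul_right_cancel₀ h1q (show (sf + g) * (1 - q) = 1 * (1 - q) by
      linear_combination h_sf + h_g6)
    linarith
  have h_n : n = 1 - sd := by linear_combination (1 - sd) * s1 - sd * s2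
  have h_n2 : n2 = 1 - se := by linear_combination y1 + se * x1
  -- the three key identities
  have T1 : D + D₃ = B + C := by rw [hDb, hD3b, h_n]; module
  have T2 : E + E₃ = C + A := by rw [hEb, hE3b, h_n2]; module
  have T3 : F + F₃ = A + B := by
    have hg : g = 1 - sf := by linarith
    rw [hFb, hF3b, hg]; module
  -- conclude by affinity
  have lin : ∀ (f : (ℝ × ℝ) →ᵃ[ℝ] ℝ × ℝ) (X Y : ℝ × ℝ), f.linear (X - Y) = f X - f Y := by
    intro f X Y
    rw [← vsub_eq_sub, ← vsub_eq_sub]; exact f.linearMap_vsub X Y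
  have key : ∀ (f : (ℝ × ℝ) →ᵃ[ℝ] ℝ × ℝ) (X : ℝ × ℝ) (a b : ℝ),
      X - A = a • (B - A) + b • (C - A) →
      f X = f A + a • (f B - f A) + b • (f C - f A) := by
    intro f X a b hX
    have hX' : X = (a • (B - A) + b • (C - A)) +ᵥ A := by
      rw [vadd_eq_add]; linear_combination (norm := module) hX
    rw [hX', AffineMap.map_vadd, map_add, map_smul, map_smul, lin, lin, vadd_eq_add]
    abel
  intro R
  obtain ⟨a, b, hR⟩ := coords R
  have e1 := key TP R a b hR
  have e2 := key TP' R a b hR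
  rw [e1, e2, hTPA, hTPB, hTPC, hTP'A, hTP'B, hTP'C, hG]
  have hmid : ∀ x y : ℝ × ℝ, midpoint ℝ x y = (2⁻¹ : ℝ) • (x + y) := by
    intro x y; rw [midpoint_eq_smul_add, invOf_eq_inv]
  rw [hmid]
  linear_combination (norm := module) (-((1 - a - b) / 2) : ℝ) • T1 + (-(a / 2) : ℝ) • T2 +
    (-(b / 2) : ℝ) • T3 - ((1 / 2 : ℝ)) • hR
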